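/- arXiv:1611.00696 — 5 statements merged into one kernel-verified Lean document; each statement's English description precedes it below -/
import Mathlib

section
/- Range criterion (first part of Proposition 2.1(d), proved in the Appendix): for every f ∈ H, f belongs to ran(A_Θ − z) := {Tu − z·u : u ∈ dom A_Θ} if and only if G_{z̄}* f belongs to ran(Θ − M_z) := {Θφ − M_zφ : φ ∈ dom Θ}. -/
/-!
Every `u ∈ dom T` splits as `u = R_z (T - z) u + G_z (Γ₁ u)`: the first summand has
`Γ₁ = 0`, so the difference is a solution of `T w = z w` with boundary value `Γ₁ u`,
which `G_z` reproduces. Applying `Γ₂` gives the abstract Green formula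
`Γ₂ u = G_{z̄}* (T - z) u + M_z Γ₁ u`. Hence for `(T - z) u = f` the boundary condition
`Γ₂ u = Θ Γ₁ u` says exactly `(Θ - M_z) Γ₁ u = G_{z̄}* f`; conversely, if
`(Θ - M_z) φ = G_{z̄}* f`, then `u := R_z f + G_z φ` lies in `dom A_Θ` and `(T - z) u = f`.
-/

namespace BoundaryTriplet

variable {𝕜 H B : Type*} [CommRing 𝕜] [AddCommGroup H] [Module 𝕜 H]
  [AddCommGroup B] [Module 𝕜 B] {domT : Submodule 𝕜 H}
  (T : domT →ₗ[𝕜] H) (Γ₁ Γ₂ : domT →ₗ[𝕜] B) (z : 𝕜) {R : H → domT} {G : B → domT}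

theorem eq_resolvent_add_gammaField (hRΓ : ∀ f, Γ₁ (R f) = 0)
    (hR : ∀ f, T (R f) - z • (R f : H) = f)
    (hGInv : ∀ u, T u = z • (u : H) → G (Γ₁ u) = u) (u : domT) :
    u = R (T u - z • (u : H)) + G (Γ₁ u) := by
  set w := u - R (T u - z • (u : H))
  have hTw : T w = z • (w : H) := by
    simp only [w, map_sub, Submodule.coe_sub, smul_sub]
    linear_combination (norm := module) -hR (T u - z • (u : H))
  have hΓw : Γ₁ w = Γ₁ u := by simp [w, hRΓ]
  rw [← hΓw, hGInv w hTw, add_sub_cancel]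

theorem boundary₂_eq_add_weyl (hRΓ : ∀ f, Γ₁ (R f) = 0)
    (hR : ∀ f, T (R f) - z • (R f : H) = f)
    (hGInv : ∀ u, T u = z • (u : H) → G (Γ₁ u) = u)
    {K : H → B} (hΓ₂R : ∀ f, Γ₂ (R f) = K f) {M : B → B} (hM : ∀ φ, M φ = Γ₂ (G φ))
    (u : domT) :
    Γ₂ u = K (T u - z • (u : H)) + M (Γ₁ u) := by
  conv_lhs => rw [eq_resolvent_add_gammaField T Γ₁ z hRΓ hR hGInv u]
  rw [map_add, hΓ₂R, hM]

theorem exists_extension_sub_eq_iff (hRΓ : ∀ f, Γ₁ (R f) = 0)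
    (hR : ∀ f, T (R f) - z • (R f : H) = f)
    (hGEig : ∀ φ, T (G φ) = z • (G φ : H)) (hGΓ : ∀ φ, Γ₁ (G φ) = φ)
    (hGInv : ∀ u, T u = z • (u : H) → G (Γ₁ u) = u)
    {K : H → B} (hΓ₂R : ∀ f, Γ₂ (R f) = K f) {M : B → B} (hM : ∀ φ, M φ = Γ₂ (G φ))
    (domΘ : Submodule 𝕜 B) (Θ : domΘ →ₗ[𝕜] B) (f : H) :
    (∃ u : domT, ∃ hu : Γ₁ u ∈ domΘ, Γ₂ u = Θ ⟨Γ₁ u, hu⟩ ∧ T u - z • (u : H) = f) ↔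
      ∃ φ : domΘ, Θ φ - M φ = K f := by
  have green := boundary₂_eq_add_weyl T Γ₁ Γ₂ z hRΓ hR hGInv hΓ₂R hM
  constructor
  · rintro ⟨u, hu, hΘ, rfl⟩
    exact ⟨⟨Γ₁ u, hu⟩, by rw [← hΘ, green, add_sub_cancel_right]⟩
  · rintro ⟨⟨φ, hφ⟩, hΘ⟩
    have hΓ : Γ₁ (R f + G φ) = φ := by rw [map_add, hRΓ, hGΓ, zero_add]
    have hTz : T (R f + G φ) - z • ((R f + G φ : domT) : H) = f := by
      rw [map_add, Submodule.coe_add, smul_add, hGEig]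
      linear_combination (norm := module) hR f
    refine ⟨R f + G φ, by rwa [hΓ], ?_, hTz⟩
    simp only [green, hTz, hΓ, ← hΘ, sub_add_cancel]

end BoundaryTriplet

theorem stmt_1_general
    {H B : Type*} [NormedAddCommGroup H] [InnerProductSpace ℂ H] [CompleteSpace H]
    [NormedAddCommGroup B] [InnerProductSpace ℂ B] [CompleteSpace B]
    (domT : Submodule ℂ H) (T : domT →ₗ[ℂ] H) (Γ₁ Γ₂ : domT →ₗ[ℂ] B)
    (z : ℂ)
    -- (i) resolvents of A at z and z̄
    (Rz : H →L[ℂ] H)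
    (hRzMem : ∀ f : H, Rz f ∈ domT)
    (hRzΓ : ∀ f : H, Γ₁ ⟨Rz f, hRzMem f⟩ = 0)
    (hRzEq : ∀ f : H, T ⟨Rz f, hRzMem f⟩ - z • (Rz f) = f)
    -- (ii) the γ-field at z and z̄
    (Gz Gzc : B →L[ℂ] H)
    (hGzMem : ∀ φ : B, Gz φ ∈ domT)
    (hGzEig : ∀ φ : B, T ⟨Gz φ, hGzMem φ⟩ = z • (Gz φ))
    (hGzΓ : ∀ φ : B, Γ₁ ⟨Gz φ, hGzMem φ⟩ = φ)
    (hGzInv : ∀ u : domT, T u = z • (u : H) → Gz (Γ₁ u) = (u : H))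
    -- (iii) the link between Γ₂, the resolvent and the adjoint of the γ-field
    (hΓ₂R : ∀ f : H, Γ₂ ⟨Rz f, hRzMem f⟩ = ContinuousLinearMap.adjoint Gzc f)
    -- the Weyl operator M_z = Γ₂ ∘ G_z
    (M : B → B) (hM : ∀ φ : B, M φ = Γ₂ ⟨Gz φ, hGzMem φ⟩)
    -- the boundary parameter Θ
    (domΘ : Submodule ℂ B) (Θ : domΘ →ₗ[ℂ] B)
    :
    ∀ f : H,
      (∃ u : domT, ∃ hu : Γ₁ u ∈ domΘ,
          Γ₂ u = Θ ⟨Γ₁ u, hu⟩ ∧ T u - z • (u : H) = f) ↔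
      (∃ φ : domΘ, Θ φ - M (φ : B) = ContinuousLinearMap.adjoint Gzc f) :=
  BoundaryTriplet.exists_extension_sub_eq_iff T Γ₁ Γ₂ z (R := fun f => ⟨Rz f, hRzMem f⟩)
    (G := fun φ => ⟨Gz φ, hGzMem φ⟩) hRzΓ hRzEq hGzEig hGzΓ
    (fun u hu => Subtype.ext (hGzInv u hu)) hΓ₂R hM domΘ Θ

/-- Range criterion (Proposition 2.1(d), first part): `f ∈ ran (A_Θ - z)` if and
only if `G_{z̄}* f ∈ ran (Θ - M_z)`. -/
theorem stmt_1
    {H B : Type*} [NormedAddCommGroup H] [InnerProductSpace ℂ H] [CompleteSpace H]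
    [NormedAddCommGroup B] [InnerProductSpace ℂ B] [CompleteSpace B]
    (domT : Submodule ℂ H) (T : domT →ₗ[ℂ] H) (Γ₁ Γ₂ : domT →ₗ[ℂ] B)
    (z : ℂ)
    -- (i) resolvents of A at z and z̄
    (Rz Rzc : H →L[ℂ] H)
    (hRzMem : ∀ f : H, Rz f ∈ domT)
    (hRzΓ : ∀ f : H, Γ₁ ⟨Rz f, hRzMem f⟩ = 0)
    (hRzEq : ∀ f : H, T ⟨Rz f, hRzMem f⟩ - z • (Rz f) = f)
    (hRzInv : ∀ u : domT, Γ₁ u = 0 → Rz (T u - z • (u : H)) = (u : H))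
    (hRzcMem : ∀ f : H, Rzc f ∈ domT)
    (hRzcΓ : ∀ f : H, Γ₁ ⟨Rzc f, hRzcMem f⟩ = 0)
    (hRzcEq : ∀ f : H, T ⟨Rzc f, hRzcMem f⟩ - (starRingEnd ℂ z) • (Rzc f) = f)
    (hRzcInv : ∀ u : domT, Γ₁ u = 0 →
      Rzc (T u - (starRingEnd ℂ z) • (u : H)) = (u : H))
    -- (ii) the γ-field at z and z̄
    (Gz Gzc : B →L[ℂ] H)
    (hGzMem : ∀ φ : B, Gz φ ∈ domT)
    (hGzEig : ∀ φ : B, T ⟨Gz φ, hGzMem φ⟩ = z • (Gz φ))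
    (hGzΓ : ∀ φ : B, Γ₁ ⟨Gz φ, hGzMem φ⟩ = φ)
    (hGzInv : ∀ u : domT, T u = z • (u : H) → Gz (Γ₁ u) = (u : H))
    (hGzcMem : ∀ φ : B, Gzc φ ∈ domT)
    (hGzcEig : ∀ φ : B, T ⟨Gzc φ, hGzcMem φ⟩ = (starRingEnd ℂ z) • (Gzc φ))
    (hGzcΓ : ∀ φ : B, Γ₁ ⟨Gzc φ, hGzcMem φ⟩ = φ)
    (hGzcInv : ∀ u : domT, T u = (starRingEnd ℂ z) • (u : H) → Gzc (Γ₁ u) = (u : H))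
    -- (iii) the link between Γ₂, the resolvent and the adjoint of the γ-field
    (hΓ₂R : ∀ f : H, Γ₂ ⟨Rz f, hRzMem f⟩ = ContinuousLinearMap.adjoint Gzc f)
    -- the Weyl operator M_z = Γ₂ ∘ G_z
    (M : B → B) (hM : ∀ φ : B, M φ = Γ₂ ⟨Gz φ, hGzMem φ⟩)
    -- the boundary parameter Θ
    (domΘ : Submodule ℂ B) (Θ : domΘ →ₗ[ℂ] B)
    :
    ∀ f : H,
      (∃ u : domT, ∃ hu : Γ₁ u ∈ domΘ,
          Γ₂ u = Θ ⟨Γ₁ u, hu⟩ ∧ T u - z • (u : H) = f) ↔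
      (∃ φ : domΘ, Θ φ - M (φ : B) = ContinuousLinearMap.adjoint Gzc f) :=
  stmt_1_general domT T Γ₁ Γ₂ z Rz hRzMem hRzΓ hRzEq Gz Gzc hGzMem hGzEig hGzΓ hGzInv hΓ₂R M hM domΘ
    Θ
end

section
/- Invertibility correspondence (Proposition 2.1(a), bijectivity form): assume in addition (iv) that the map u ↦ (Γ₁u, Γ₂u) from dom T to 𝔥 × 𝔥 is surjective. Then A_Θ − z : dom A_Θ → H is a bijection if and only if Θ − M_z : dom Θ → 𝔥 is a bijection. -/
/-!
Every `u ∈ dom T` splits as `u = R_z (T - z) u + G_z Γ₁ u`, so `u ↦ ((T - z) u, Γ₁ u)` identifies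
`dom T` with `H × 𝔥`. For `f = (T - z) u` and `φ = Γ₁ u` this gives `Γ₂ u = Γ₂ R_z f + M_z φ`,
so the domain of `A_Θ` becomes the set of pairs `(f, φ)` with `φ ∈ dom Θ` and
`(Θ - M_z) φ = Γ₂ R_z f`, on which `A_Θ - z` is the projection to `f`. That projection is
injective iff `Θ - M_z` is, and surjective iff `ran Γ₂ R_z ⊆ ran (Θ - M_z)`; by (iv), `Γ₂ R_z` is
onto `𝔥`.
-/

open Function

section Projection

variable {R H D B : Type*} [Ring R] [AddCommGroup H] [Module R H] [AddCommGroup D] [Module R D]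
  [AddCommGroup B] [Module R B] {E : D →ₗ[R] B} {K : H →ₗ[R] B}

theorem injective_fst_solutions_iff :
    Injective (fun p : {p : H × D // E p.2 = K p.1} => p.1.1) ↔ Injective E := by
  refine ⟨fun h => (injective_iff_map_eq_zero E).mpr fun φ hφ => ?_, fun h p q hpq => ?_⟩
  · have h0 := @h ⟨(0, φ), by simpa using hφ⟩ ⟨(0, 0), by simp⟩ rfl
    exact congrArg (fun p => p.1.2) h0
  · replace hpq : p.1.1 = q.1.1 := hpq
    have hE : E p.1.2 = E q.1.2 := by rw [p.2, q.2, hpq]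
    exact Subtype.ext (Prod.ext hpq (h hE))

theorem surjective_fst_solutions_iff (hK : Surjective K) :
    Surjective (fun p : {p : H × D // E p.2 = K p.1} => p.1.1) ↔ Surjective E := by
  refine ⟨fun h ψ => ?_, fun h f => ?_⟩
  · obtain ⟨f, rfl⟩ := hK ψ
    obtain ⟨p, rfl⟩ := h f
    exact ⟨p.1.2, p.2⟩
  · obtain ⟨φ, hφ⟩ := h (K f)
    exact ⟨⟨(f, φ), hφ⟩, rfl⟩

theorem bijective_fst_solutions_iff (hK : Surjective K) :
    Bijective (fun p : {p : H × D // E p.2 = K p.1} => p.1.1) ↔ Bijective E :=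
  and_congr injective_fst_solutions_iff (surjective_fst_solutions_iff hK)

end Projection

section Decomposition

variable {R V H B : Type*} [Ring R] [AddCommGroup V] [Module R V] [AddCommGroup H] [Module R H]
  [AddCommGroup B] [Module R B] {L : V →ₗ[R] H} {Γ₁ Γ₂ : V →ₗ[R] B} {Rs : H →ₗ[R] V}
  {G : B →ₗ[R] V}

theorem resolvent_add_gamma_eq (hLR : ∀ f, L (Rs f) = f) (hΓ₁R : ∀ f, Γ₁ (Rs f) = 0)
    (hGΓ₁ : ∀ u, L u = 0 → G (Γ₁ u) = u) (u : V) : Rs (L u) + G (Γ₁ u) = u := by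
  have hker : L (u - Rs (L u)) = 0 := by rw [map_sub, hLR, sub_self]
  have hbdry : Γ₁ (u - Rs (L u)) = Γ₁ u := by rw [map_sub, hΓ₁R, sub_zero]
  rw [← hbdry, hGΓ₁ _ hker, add_sub_cancel]

theorem surjective_comp_resolvent (hLR : ∀ f, L (Rs f) = f) (hΓ₁R : ∀ f, Γ₁ (Rs f) = 0)
    (hGΓ₁ : ∀ u, L u = 0 → G (Γ₁ u) = u) (hΓ₂ : ∀ ψ, ∃ w, Γ₁ w = 0 ∧ Γ₂ w = ψ) :
    Surjective (Γ₂ ∘ₗ Rs) := fun ψ => by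
  obtain ⟨w, hw₁, rfl⟩ := hΓ₂ ψ
  refine ⟨L w, ?_⟩
  have hw := resolvent_add_gamma_eq hLR hΓ₁R hGΓ₁ w
  rw [hw₁, map_zero, add_zero] at hw
  rw [LinearMap.comp_apply, hw]

variable {D : Submodule R B} {Θ : D →ₗ[R] B}

def domainEquivSolutions (hLR : ∀ f, L (Rs f) = f) (hΓ₁R : ∀ f, Γ₁ (Rs f) = 0)
    (hLG : ∀ φ, L (G φ) = 0) (hΓ₁G : ∀ φ, Γ₁ (G φ) = φ) (hGΓ₁ : ∀ u, L u = 0 → G (Γ₁ u) = u) :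
    {u : V // ∃ hu : Γ₁ u ∈ D, Γ₂ u = Θ ⟨Γ₁ u, hu⟩} ≃
      {p : H × D // (Θ - (Γ₂ ∘ₗ G) ∘ₗ D.subtype) p.2 = (Γ₂ ∘ₗ Rs) p.1} where
  toFun u := ⟨(L u.1, ⟨Γ₁ u.1, u.2.1⟩), by
    obtain ⟨u, hu, hΓ₂u⟩ := u
    have hu' := congrArg Γ₂ (resolvent_add_gamma_eq hLR hΓ₁R hGΓ₁ u)
    rw [map_add] at hu'
    simp only [LinearMap.sub_apply, LinearMap.comp_apply, Submodule.subtype_apply, ← hΓ₂u]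
    rw [← hu', add_sub_cancel_right]⟩
  invFun p := ⟨Rs p.1.1 + G p.1.2, by
    obtain ⟨⟨f, φ⟩, hp⟩ := p
    dsimp only
    have hΓ₁ : Γ₁ (Rs f + G φ) = φ := by rw [map_add, hΓ₁R, hΓ₁G, zero_add]
    refine ⟨by rw [hΓ₁]; exact φ.2, ?_⟩
    simp only [LinearMap.sub_apply, LinearMap.comp_apply, Submodule.subtype_apply] at hp
    calc Γ₂ (Rs f + G φ) = Θ φ := by rw [map_add, ← hp, sub_add_cancel]
      _ = Θ ⟨_, _⟩ := congrArg Θ (Subtype.ext hΓ₁).symm⟩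
  left_inv u := Subtype.ext (resolvent_add_gamma_eq hLR hΓ₁R hGΓ₁ u.1)
  right_inv p := by
    obtain ⟨⟨f, φ⟩, hp⟩ := p
    refine Subtype.ext (Prod.ext ?_ (Subtype.ext ?_))
    · simp only [map_add, hLR, hLG, add_zero]
    · simp only [map_add, hΓ₁R, hΓ₁G, zero_add]

theorem bijective_restrict_iff_bijective_sub_weyl (hLR : ∀ f, L (Rs f) = f)
    (hΓ₁R : ∀ f, Γ₁ (Rs f) = 0) (hLG : ∀ φ, L (G φ) = 0) (hΓ₁G : ∀ φ, Γ₁ (G φ) = φ)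
    (hGΓ₁ : ∀ u, L u = 0 → G (Γ₁ u) = u) (hΓ₂ : ∀ ψ, ∃ w, Γ₁ w = 0 ∧ Γ₂ w = ψ) :
    Bijective (fun u : {u : V // ∃ hu : Γ₁ u ∈ D, Γ₂ u = Θ ⟨Γ₁ u, hu⟩} => L u.1) ↔
      Bijective (Θ - (Γ₂ ∘ₗ G) ∘ₗ D.subtype) := by
  rw [← bijective_fst_solutions_iff (surjective_comp_resolvent hLR hΓ₁R hGΓ₁ hΓ₂),
    ← Equiv.bijective_comp (domainEquivSolutions hLR hΓ₁R hLG hΓ₁G hGΓ₁)]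
  rfl

end Decomposition

theorem stmt_4_general
    {H B : Type*} [NormedAddCommGroup H] [InnerProductSpace ℂ H]
    [NormedAddCommGroup B] [InnerProductSpace ℂ B]
    (domT : Submodule ℂ H) (T : domT →ₗ[ℂ] H) (Γ₁ Γ₂ : domT →ₗ[ℂ] B)
    (z : ℂ)
    -- (i) resolvents of A at z and z̄
    (Rz : H →L[ℂ] H)
    (hRzMem : ∀ f : H, Rz f ∈ domT)
    (hRzΓ : ∀ f : H, Γ₁ ⟨Rz f, hRzMem f⟩ = 0)
    (hRzEq : ∀ f : H, T ⟨Rz f, hRzMem f⟩ - z • (Rz f) = f)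
    -- (ii) the γ-field at z and z̄
    (Gz : B →L[ℂ] H)
    (hGzMem : ∀ φ : B, Gz φ ∈ domT)
    (hGzEig : ∀ φ : B, T ⟨Gz φ, hGzMem φ⟩ = z • (Gz φ))
    (hGzΓ : ∀ φ : B, Γ₁ ⟨Gz φ, hGzMem φ⟩ = φ)
    (hGzInv : ∀ u : domT, T u = z • (u : H) → Gz (Γ₁ u) = (u : H))
    -- the Weyl operator M_z = Γ₂ ∘ G_z
    (M : B → B) (hM : ∀ φ : B, M φ = Γ₂ ⟨Gz φ, hGzMem φ⟩)
    -- the boundary parameter Θ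
    (domΘ : Submodule ℂ B) (Θ : domΘ →ₗ[ℂ] B)
    -- (iv) surjectivity of the combined boundary map
    (hsurj : ∀ p : B × B, ∃ u : domT, Γ₁ u = p.1 ∧ Γ₂ u = p.2) :
    Function.Bijective
        (fun u : {u : domT // ∃ hu : Γ₁ u ∈ domΘ, Γ₂ u = Θ ⟨Γ₁ u, hu⟩} =>
          T u.1 - z • ((u.1 : domT) : H)) ↔
      Function.Bijective (fun φ : domΘ => Θ φ - M (φ : B)) := by
  obtain rfl : M = fun φ => Γ₂ ⟨Gz φ, hGzMem φ⟩ := funext hM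
  exact bijective_restrict_iff_bijective_sub_weyl (L := T - z • domT.subtype)
    (Rs := (Rz : H →ₗ[ℂ] H).codRestrict domT hRzMem)
    (G := (Gz : B →ₗ[ℂ] H).codRestrict domT hGzMem) (Θ := Θ) hRzEq hRzΓ
    (fun φ => sub_eq_zero.mpr (hGzEig φ)) hGzΓ
    (fun u hu => Subtype.ext (hGzInv u (sub_eq_zero.mp hu))) (fun ψ => hsurj (0, ψ))

/-- Invertibility correspondence (Proposition 2.1(a), bijectivity form): assuming
additionally that `u ↦ (Γ₁ u, Γ₂ u)` is surjective, `A_Θ - z : dom A_Θ → H` is a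
bijection if and only if `Θ - M_z : dom Θ → 𝔥` is a bijection. -/
theorem stmt_4
    {H B : Type*} [NormedAddCommGroup H] [InnerProductSpace ℂ H] [CompleteSpace H]
    [NormedAddCommGroup B] [InnerProductSpace ℂ B] [CompleteSpace B]
    (domT : Submodule ℂ H) (T : domT →ₗ[ℂ] H) (Γ₁ Γ₂ : domT →ₗ[ℂ] B)
    (z : ℂ)
    -- (i) resolvents of A at z and z̄
    (Rz Rzc : H →L[ℂ] H)
    (hRzMem : ∀ f : H, Rz f ∈ domT)
    (hRzΓ : ∀ f : H, Γ₁ ⟨Rz f, hRzMem f⟩ = 0)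
    (hRzEq : ∀ f : H, T ⟨Rz f, hRzMem f⟩ - z • (Rz f) = f)
    (hRzInv : ∀ u : domT, Γ₁ u = 0 → Rz (T u - z • (u : H)) = (u : H))
    (hRzcMem : ∀ f : H, Rzc f ∈ domT)
    (hRzcΓ : ∀ f : H, Γ₁ ⟨Rzc f, hRzcMem f⟩ = 0)
    (hRzcEq : ∀ f : H, T ⟨Rzc f, hRzcMem f⟩ - (starRingEnd ℂ z) • (Rzc f) = f)
    (hRzcInv : ∀ u : domT, Γ₁ u = 0 →
      Rzc (T u - (starRingEnd ℂ z) • (u : H)) = (u : H))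
    -- (ii) the γ-field at z and z̄
    (Gz Gzc : B →L[ℂ] H)
    (hGzMem : ∀ φ : B, Gz φ ∈ domT)
    (hGzEig : ∀ φ : B, T ⟨Gz φ, hGzMem φ⟩ = z • (Gz φ))
    (hGzΓ : ∀ φ : B, Γ₁ ⟨Gz φ, hGzMem φ⟩ = φ)
    (hGzInv : ∀ u : domT, T u = z • (u : H) → Gz (Γ₁ u) = (u : H))
    (hGzcMem : ∀ φ : B, Gzc φ ∈ domT)
    (hGzcEig : ∀ φ : B, T ⟨Gzc φ, hGzcMem φ⟩ = (starRingEnd ℂ z) • (Gzc φ))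
    (hGzcΓ : ∀ φ : B, Γ₁ ⟨Gzc φ, hGzcMem φ⟩ = φ)
    (hGzcInv : ∀ u : domT, T u = (starRingEnd ℂ z) • (u : H) → Gzc (Γ₁ u) = (u : H))
    -- (iii) the link between Γ₂, the resolvent and the adjoint of the γ-field
    (hΓ₂R : ∀ f : H, Γ₂ ⟨Rz f, hRzMem f⟩ = ContinuousLinearMap.adjoint Gzc f)
    -- the Weyl operator M_z = Γ₂ ∘ G_z
    (M : B → B) (hM : ∀ φ : B, M φ = Γ₂ ⟨Gz φ, hGzMem φ⟩)
    -- the boundary parameter Θ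
    (domΘ : Submodule ℂ B) (Θ : domΘ →ₗ[ℂ] B)
    -- (iv) surjectivity of the combined boundary map
    (hsurj : ∀ p : B × B, ∃ u : domT, Γ₁ u = p.1 ∧ Γ₂ u = p.2) :
    Function.Bijective
        (fun u : {u : domT // ∃ hu : Γ₁ u ∈ domΘ, Γ₂ u = Θ ⟨Γ₁ u, hu⟩} =>
          T u.1 - z • ((u.1 : domT) : H)) ↔
      Function.Bijective (fun φ : domΘ => Θ φ - M (φ : B)) :=
  stmt_4_general domT T Γ₁ Γ₂ z Rz hRzMem hRzΓ hRzEq Gz hGzMem hGzEig hGzΓ hGzInv M hM domΘ Θ hsurj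
end

section
/- Explicit inverse of the mode matrices D_m (Section 5): let 0 < r_i < r_e < R be reals, m ≥ 1 an integer, and set s := (r_e/r_i)^m, t := s², T := (R/r_e)^{2m}. Define the 2×2 real matrices D_m := 2m·[[(1/r_i)·1/(t−1), −(1/r_i)·s/(t−1)], [−(1/r_e)·s/(t−1), (1/r_e)·(1/(t−1) − 1/(T−1))]] and E_m := −(1/(2m))·[[r_i·(1 − (r_e²/(r_i·R))^{2m}), r_e·s·(1 − (r_e/R)^{2m})], [r_i·s·(1 − (r_e/R)^{2m}), r_e·(1 − (r_e/R)^{2m})]]. Then D_m·E_m = E_m·D_m = I; in particular D_m is invertible with D_m⁻¹ = E_m. -/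
/-!
After substituting `(r_e/R)^{2m} = 1/T` and `(r_e²/(r_i R))^{2m} = t/T`, every entry of the product
`D_m E_m` is a rational function of `s` and `T` alone, and the product collapses to the identity:
the scalar factors `2m` and `-1/(2m)` cancel, and the remaining matrix product is `-1`.
-/

open Matrix

theorem modeMatrix_mul_eq_neg_one {K : Type*} [Field K] (a b s T : K) (ha : a ≠ 0) (hb : b ≠ 0)
    (hs : s ^ 2 - 1 ≠ 0) (hT : T - 1 ≠ 0) (hT₀ : T ≠ 0) :
    !![(1 / a) * (1 / (s ^ 2 - 1)), -((1 / a) * (s / (s ^ 2 - 1)));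
       -((1 / b) * (s / (s ^ 2 - 1))), (1 / b) * (1 / (s ^ 2 - 1) - 1 / (T - 1))] *
    !![a * (1 - s ^ 2 / T), b * s * (1 - 1 / T);
       a * s * (1 - 1 / T), b * (1 - 1 / T)] = -1 := by
  rw [mul_fin_two, ← neg_one_smul K (1 : Matrix (Fin 2) (Fin 2) K), one_fin_two]
  ext i j
  fin_cases i <;> fin_cases j <;>
    simp only [Fin.zero_eta, Fin.mk_one, of_apply, cons_val', cons_val_zero, cons_val_one,
      cons_val_fin_one, Matrix.smul_apply, smul_eq_mul, mul_one, mul_zero] <;>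
    field_simp <;> ring

/-- Explicit inverse of the mode matrices `D_m` (Section 5): with
`s = (r_e/r_i)^m`, `t = s²`, `TT = (R/r_e)^{2m}`, the matrix `E_m` is a two-sided
inverse of `D_m`; in particular `D_m` is invertible with `D_m⁻¹ = E_m`. -/
theorem stmt_9
    (ri re R : ℝ) (hri : 0 < ri) (hrie : ri < re) (hreR : re < R)
    (m : ℕ) (hm : 1 ≤ m)
    (s t TT : ℝ) (hs : s = (re / ri) ^ m) (ht : t = s ^ 2)
    (hTT : TT = (R / re) ^ (2 * m))
    (D E : Matrix (Fin 2) (Fin 2) ℝ)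
    (hD : D = (2 * (m : ℝ)) •
      !![(1 / ri) * (1 / (t - 1)), -((1 / ri) * (s / (t - 1)));
         -((1 / re) * (s / (t - 1))), (1 / re) * (1 / (t - 1) - 1 / (TT - 1))])
    (hE : E = -(1 / (2 * (m : ℝ))) •
      !![ri * (1 - (re ^ 2 / (ri * R)) ^ (2 * m)), re * s * (1 - (re / R) ^ (2 * m));
         ri * s * (1 - (re / R) ^ (2 * m)), re * (1 - (re / R) ^ (2 * m))]) :
    D * E = 1 ∧ E * D = 1 ∧ IsUnit D ∧ D⁻¹ = E := by
  have hre : 0 < re := hri.trans hrie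
  have hs₁ : 1 < s := hs ▸ one_lt_pow₀ ((one_lt_div hri).mpr hrie) (by omega)
  have hTT₁ : 1 < TT := hTT ▸ one_lt_pow₀ ((one_lt_div hre).mpr hreR) (by omega)
  have hq : (re / R) ^ (2 * m) = 1 / TT := by rw [hTT, ← _root_.one_div_pow, one_div_div]
  have hq' : (re ^ 2 / (ri * R)) ^ (2 * m) = s ^ 2 / TT := by
    rw [show re ^ 2 / (ri * R) = re / ri * (re / R) by field_simp, mul_pow, hq, hs, ← pow_mul,
      mul_comm m 2, mul_one_div]
  have hscalar : 2 * (m : ℝ) * -(1 / (2 * m)) = -1 := by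
    field_simp [show (m : ℝ) ≠ 0 by positivity]
  have hDE : D * E = 1 := by
    rw [hD, hE, ht, hq, hq', smul_mul_smul_comm, hscalar,
      modeMatrix_mul_eq_neg_one ri re s TT hri.ne' hre.ne' (by nlinarith) (by linarith)
        (by linarith), neg_one_smul, neg_neg]
  exact ⟨hDE, mul_eq_one_comm.mp hDE, ⟨⟨D, E, hDE, mul_eq_one_comm.mp hDE⟩, rfl⟩,
    inv_eq_right_inv hDE⟩
end

section
/- Asymptotics of the Neumann datum (Section 5): let 0 < r_e ≤ a < b ≤ R be reals. For an integer m ≥ 1 set I_m := ∫_a^b ((R/s)^m − (s/R)^m)·s ds and J_m := (R/r_e)^m − (r_e/R)^m. Then lim_{m→∞} (m/a²)·(a/r_e)^m·(I_m/J_m) = 1; equivalently, I_m/J_m = (a² + o(1))·(r_e/a)^m/m as m → ∞. -/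
/-!
Both integrals are elementary: for `m ≠ 2`,
`I_m = R^m (b^{2-m} - a^{2-m})/(2-m) - (b^{m+2} - a^{m+2})/((m+2) R^m)`,
and `J_m = (R/r_e)^m (1 - (r_e/R)^{2m})`. After multiplying by `(m/a²)(a/r_e)^m`, only the term
`m/(m-2)` coming from `a^{2-m}` survives; every other term carries a geometric factor
`(a/b)^m`, `(ab/R²)^m`, `(a/R)^{2m}` or `(r_e/R)^{2m}`, all of ratio `< 1`.
-/

open Filter Topology intervalIntegral

theorem integral_div_pow_mul_self (R : ℝ) {a b : ℝ} (ha : 0 < a) (hb : 0 < b) {m : ℕ}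
    (hm : m ≠ 2) :
    ∫ s in a..b, (R / s) ^ m * s = R ^ m * (b ^ 2 / b ^ m - a ^ 2 / a ^ m) / (2 - m) := by
  have h0 : (0 : ℝ) ∉ Set.uIcc a b := Set.notMem_uIcc_of_lt ha hb
  have hzpow : ∀ s ∈ Set.uIcc a b, (R / s) ^ m * s = R ^ m * s ^ ((1 : ℤ) - m) := by
    intro s hs
    have hs : s ≠ 0 := ne_of_mem_of_not_mem hs h0
    rw [zpow_sub₀ hs, zpow_one, zpow_natCast, div_pow]
    field_simp
  have hexp : (1 - m : ℤ) ≠ -1 := by omega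
  rw [integral_congr hzpow, integral_const_mul, integral_zpow (Or.inr ⟨hexp, h0⟩),
    show (1 - m + 1 : ℤ) = 2 - m by ring, zpow_sub₀ hb.ne', zpow_sub₀ ha.ne']
  simp only [zpow_ofNat, zpow_natCast]
  push_cast
  ring

theorem integral_pow_div_mul_self (R a b : ℝ) (m : ℕ) :
    ∫ s in a..b, (s / R) ^ m * s = (b ^ (m + 2) - a ^ (m + 2)) / (m + 2) / R ^ m := by
  have hpow : ∀ s : ℝ, (s / R) ^ m * s = (R ^ m)⁻¹ * s ^ (m + 1) := fun s => by
    rw [div_pow, pow_succ]; ring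
  simp_rw [hpow, integral_const_mul, integral_pow]
  push_cast
  ring

theorem integral_div_pow_sub_pow_div_mul_self (R : ℝ) {a b : ℝ} (ha : 0 < a) (hb : 0 < b)
    {m : ℕ} (hm : m ≠ 2) :
    ∫ s in a..b, ((R / s) ^ m - (s / R) ^ m) * s =
      R ^ m * (b ^ 2 / b ^ m - a ^ 2 / a ^ m) / (2 - m) -
        (b ^ (m + 2) - a ^ (m + 2)) / (m + 2) / R ^ m := by
  have h0 : (0 : ℝ) ∉ Set.uIcc a b := Set.notMem_uIcc_of_lt ha hb
  have hcont : ContinuousOn (fun s : ℝ => (R / s) ^ m * s) (Set.uIcc a b) :=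
    ((continuousOn_const.div continuousOn_id fun s hs => ne_of_mem_of_not_mem hs h0).pow m).mul
      continuousOn_id
  simp_rw [sub_mul]
  rw [integral_sub hcont.intervalIntegrable
    ((by fun_prop : Continuous fun s : ℝ => (s / R) ^ m * s).intervalIntegrable a b),
    integral_div_pow_mul_self R ha hb hm, integral_pow_div_mul_self]

theorem div_pow_div_sub_eq_div_one_sub (x : ℝ) {r R : ℝ} (hr : r ≠ 0) (hR : R ≠ 0) (m : ℕ) :
    (x / r) ^ m / ((R / r) ^ m - (r / R) ^ m) = (x / R) ^ m / (1 - (r ^ 2 / R ^ 2) ^ m) := by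
  have hfactor : (R / r) ^ m - (r / R) ^ m = (R / r) ^ m * (1 - (r ^ 2 / R ^ 2) ^ m) := by
    rw [mul_sub, mul_one, ← mul_pow]
    congr 2
    field_simp
  rw [hfactor, ← div_div, ← div_pow, div_div_div_cancel_right₀ hr]

theorem tendsto_div_pow_atTop_nhds_zero_of_lt {x y : ℝ} (hx : 0 ≤ x) (hxy : x < y) :
    Tendsto (fun m : ℕ => (x / y) ^ m) atTop (𝓝 0) :=
  tendsto_pow_atTop_nhds_zero_of_lt_one (div_nonneg hx (hx.trans hxy.le))
    ((div_lt_one (hx.trans_lt hxy)).2 hxy)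

noncomputable def neumannNumerator (a b R : ℝ) (m : ℕ) : ℝ :=
  m / (2 - m) * ((b / a) ^ 2 * (a / b) ^ m - 1) -
    m / (m + 2) * ((b / a) ^ 2 * (a * b / R ^ 2) ^ m - (a ^ 2 / R ^ 2) ^ m)

theorem neumannNumerator_eq_scaled_integral {a b : ℝ} (R : ℝ) (ha : 0 < a) (hb : 0 < b)
    (hR : R ≠ 0) {m : ℕ} (hm : m ≠ 2) :
    neumannNumerator a b R m =
      (m / a ^ 2) * (a / R) ^ m * ∫ s in a..b, ((R / s) ^ m - (s / R) ^ m) * s := by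
  rw [integral_div_pow_sub_pow_div_mul_self R ha hb hm, neumannNumerator]
  have ha0 : a ≠ 0 := ha.ne'
  have hb0 : b ≠ 0 := hb.ne'
  simp only [div_pow, mul_pow, pow_add]
  field_simp
  ring

theorem tendsto_neumannNumerator {a b R : ℝ} (ha : 0 < a) (hab : a < b) (hbR : b ≤ R) :
    Tendsto (neumannNumerator a b R) atTop (𝓝 1) := by
  have hneg : Tendsto (fun m : ℕ => (m : ℝ) / (2 - m)) atTop (𝓝 (-1)) := by
    refine (tendsto_natCast_div_add_atTop (-2 : ℝ)).neg.congr fun m => ?_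
    rw [← div_neg]
    ring_nf
  have hb : 0 < b := ha.trans hab
  have hab_pow := tendsto_div_pow_atTop_nhds_zero_of_lt ha.le hab
  have habR_pow := tendsto_div_pow_atTop_nhds_zero_of_lt (mul_pos ha hb).le
    (by nlinarith : a * b < R ^ 2)
  have haR_pow := tendsto_div_pow_atTop_nhds_zero_of_lt (sq_nonneg a)
    (by nlinarith : a ^ 2 < R ^ 2)
  unfold neumannNumerator
  simpa using (hneg.mul ((tendsto_const_nhds.mul hab_pow).sub tendsto_const_nhds)).sub
    ((tendsto_natCast_div_add_atTop 2).mul ((tendsto_const_nhds.mul habR_pow).sub haR_pow))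

/-- Asymptotics of the Neumann datum (Section 5): with
`I_m = ∫_a^b ((R/s)^m - (s/R)^m)·s ds` and `J_m = (R/r_e)^m - (r_e/R)^m`, one has
`(m/a²)·(a/r_e)^m·(I_m/J_m) → 1` as `m → ∞`, i.e.
`I_m/J_m = (a² + o(1))·(r_e/a)^m/m`. -/
theorem stmt_12
    (re a b R : ℝ) (hre : 0 < re) (hrea : re ≤ a) (hab : a < b) (hbR : b ≤ R)
    (I J : ℕ → ℝ)
    (hI : ∀ m : ℕ, I m = ∫ s in a..b, ((R / s) ^ m - (s / R) ^ m) * s)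
    (hJ : ∀ m : ℕ, J m = (R / re) ^ m - (re / R) ^ m) :
    Filter.Tendsto (fun m : ℕ => ((m : ℝ) / a ^ 2) * (a / re) ^ m * (I m / J m))
      Filter.atTop (nhds 1) := by
  have ha : 0 < a := hre.trans_le hrea
  have hb : 0 < b := ha.trans hab
  have hR : 0 < R := hb.trans_le hbR
  have hden : Tendsto (fun m : ℕ => 1 - (re ^ 2 / R ^ 2) ^ m) atTop (𝓝 1) := by
    simpa using tendsto_const_nhds.sub
      (tendsto_div_pow_atTop_nhds_zero_of_lt (sq_nonneg re) (by nlinarith : re ^ 2 < R ^ 2))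
  have hlim := (tendsto_neumannNumerator ha hab hbR).div hden one_ne_zero
  rw [div_one] at hlim
  refine hlim.congr' ?_
  filter_upwards [eventually_ne_atTop 2] with m hm
  have hratio := div_pow_div_sub_eq_div_one_sub a hre.ne' hR.ne' m
  rw [← hJ] at hratio
  rw [Pi.div_apply, neumannNumerator_eq_scaled_integral R ha hb hR.ne' hm, ← hI]
  linear_combination (-(m / a ^ 2) * I m) * hratio
end

section
/- Componentwise asymptotics in the proof of Proposition 1.4: let 0 < r_i < r_e ≤ a < b ≤ R be reals. For an integer m ≥ 1 set I_m := ∫_a^b ((R/s)^m − (s/R)^m)·s ds, J_m := (R/r_e)^m − (r_e/R)^m, s_m := (r_e/r_i)^m, E_m := −(1/(2m))·[[r_i·(1 − (r_e²/(r_i·R))^{2m}), r_e·s_m·(1 − (r_e/R)^{2m})], [r_i·s_m·(1 − (r_e/R)^{2m}), r_e·(1 − (r_e/R)^{2m})]], and v_m := E_m·(0, I_m/(r_e·J_m))ᵀ ∈ ℝ². Then lim_{m→∞} −(2m²/a²)·(r_i·a/r_e²)^m·(v_m)₁ = 1 and lim_{m→∞} −(2m²/a²)·(a/r_e)^m·(v_m)₂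 = 1. -/
/-!
Since `1 - (r_e/R)^{2m} = (r_e/R)^m J_m`, the factor `J_m` cancels and both scaled components of
`v_m` reduce to the same quantity `(m/a²)(a/R)^m I_m`. Computing `I_m` in closed form,
`(m/a²)(a/R)^m I_m = m/(m-2) (1 - (b/a)²(a/b)^m) - m/(m+2) ((b/a)²(ab/R²)^m - (a/R)^{2m})`,
which tends to `1` because `a < b ≤ R`.
-/

open Filter Topology Matrix

noncomputable def sourceIntegral (a b R : ℝ) (m : ℕ) : ℝ :=
  ∫ s in a..b, ((R / s) ^ m - (s / R) ^ m) * s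

lemma natCast_div_sq_mul_pow_mul_sourceIntegral {a b R : ℝ} (ha : 0 < a) (hb : 0 < b)
    (hR : R ≠ 0) {m : ℕ} (hm : m ≠ 2) :
    m / a ^ 2 * (a / R) ^ m * sourceIntegral a b R m =
      m / (m - 2) * (1 - (b / a) ^ 2 * (a / b) ^ m)
        - m / (m + 2) * ((b / a) ^ 2 * (a * b / R ^ 2) ^ m - (a ^ 2 / R ^ 2) ^ m) := by
  have h0 : (0 : ℝ) ∉ Set.uIcc a b := fun h => by
    rcases Set.mem_uIcc.1 h with h | h <;> linarith [h.1]
  have hsplit : ∀ s ∈ Set.uIcc a b, ((R / s) ^ m - (s / R) ^ m) * s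
      = R ^ m * s ^ (1 - m : ℤ) - (R ^ m)⁻¹ * s ^ (m + 1) := by
    intro s hs
    have hs0 : s ≠ 0 := fun h => h0 (h ▸ hs)
    rw [zpow_sub₀ hs0, zpow_one, zpow_natCast, div_pow, div_pow]
    field_simp
    ring
  have hm' : (1 - m : ℤ) ≠ -1 := by omega
  rw [sourceIntegral, intervalIntegral.integral_congr hsplit, intervalIntegral.integral_sub
      ((intervalIntegral.intervalIntegrable_zpow (Or.inr h0)).const_mul _)
      ((intervalIntegral.intervalIntegrable_pow _).const_mul _),
    intervalIntegral.integral_const_mul, intervalIntegral.integral_const_mul,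
    integral_zpow (Or.inr ⟨hm', h0⟩), integral_pow,
    show (1 - m : ℤ) + 1 = 2 - m by ring, zpow_sub₀ hb.ne', zpow_sub₀ ha.ne']
  have hm2 : (m : ℝ) - 2 ≠ 0 := sub_ne_zero.2 (by exact_mod_cast hm)
  have hm2' : (2 : ℝ) - m ≠ 0 := sub_ne_zero.2 (by exact_mod_cast hm.symm)
  simp only [zpow_ofNat, zpow_natCast, div_pow, mul_pow]
  push_cast
  rw [show (1 : ℝ) - m + 1 = 2 - m by ring]
  field_simp
  ring

lemma tendsto_natCast_div_sub_atTop (x : ℝ) :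
    Tendsto (fun m : ℕ => (m : ℝ) / (m - x)) atTop (𝓝 1) := by
  simpa only [sub_eq_add_neg] using tendsto_natCast_div_add_atTop (-x)

lemma tendsto_natCast_div_sq_mul_pow_mul_sourceIntegral {a b R : ℝ} (ha : 0 < a)
    (hab : a < b) (hbR : b ≤ R) :
    Tendsto (fun m : ℕ => m / a ^ 2 * (a / R) ^ m * sourceIntegral a b R m) atTop (𝓝 1) := by
  have hb : 0 < b := ha.trans hab
  have hR : 0 < R := hb.trans_le hbR
  have geom : ∀ {x y : ℝ}, 0 < x → x < y → Tendsto (fun m : ℕ => (x / y) ^ m) atTop (𝓝 0) :=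
    fun hx hxy => tendsto_pow_atTop_nhds_zero_of_lt_one (div_pos hx (hx.trans hxy)).le
      ((div_lt_one (hx.trans hxy)).2 hxy)
  have hab_R : a * b < R ^ 2 := by nlinarith
  have haa_R : a ^ 2 < R ^ 2 := by nlinarith
  have hlim := ((tendsto_natCast_div_sub_atTop 2).mul
      ((tendsto_const_nhds (x := 1)).sub ((tendsto_const_nhds (x := (b / a) ^ 2)).mul
        (geom ha hab)))).sub
    ((tendsto_natCast_div_add_atTop 2).mul
      (((tendsto_const_nhds (x := (b / a) ^ 2)).mul (geom (by positivity) hab_R)).sub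
        (geom (by positivity) haa_R)))
  simp only [mul_zero, sub_zero, mul_one] at hlim
  refine hlim.congr' ?_
  filter_upwards [eventually_ne_atTop 2] with m hm
  exact (natCast_div_sq_mul_pow_mul_sourceIntegral ha hb hR.ne' hm).symm

lemma one_sub_pow_two_mul_of_mul_eq_one {x y : ℝ} (h : x * y = 1) (m : ℕ) :
    1 - x ^ (2 * m) = x ^ m * (y ^ m - x ^ m) := by
  rw [mul_sub, ← mul_pow, h, one_pow, ← pow_add, two_mul]

lemma div_pow_sub_div_pow_pos {r R : ℝ} (hr : 0 < r) (hrR : r < R) {m : ℕ} (hm : m ≠ 0) :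
    0 < (R / r) ^ m - (r / R) ^ m :=
  sub_pos.2 <| (pow_lt_one₀ (div_pos hr (hr.trans hrR)).le ((div_lt_one (hr.trans hrR)).2 hrR) hm).trans
    (one_lt_pow₀ ((one_lt_div hr).2 hrR) hm)

-- `E_m = D_m⁻¹`, the inverse of the `m`-th Fourier mode of the difference of the
-- Dirichlet-to-Neumann maps for the circles of radii `r_i < r_e < R`.
noncomputable def dtnModeInv (ri re R : ℝ) (m : ℕ) : Matrix (Fin 2) (Fin 2) ℝ :=
  -(1 / (2 * (m : ℝ))) •
    !![ri * (1 - (re ^ 2 / (ri * R)) ^ (2 * m)), re * (re / ri) ^ m * (1 - (re / R) ^ (2 * m));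
       ri * (re / ri) ^ m * (1 - (re / R) ^ (2 * m)), re * (1 - (re / R) ^ (2 * m))]

lemma dtnModeInv_mulVec {ri re R : ℝ} (hre : re ≠ 0) (hR : R ≠ 0) {m : ℕ}
    (hJ : (R / re) ^ m - (re / R) ^ m ≠ 0) (x : ℝ) :
    dtnModeInv ri re R m *ᵥ ![0, x / (re * ((R / re) ^ m - (re / R) ^ m))]
      = ![-(1 / (2 * m)) * (re / ri) ^ m * (re / R) ^ m * x,
          -(1 / (2 * m)) * (re / R) ^ m * x] := by
  have hq := one_sub_pow_two_mul_of_mul_eq_one (x := re / R) (y := R / re) (by field_simp) m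
  rw [dtnModeInv, smul_mulVec, mulVec_fin_two]
  ext i
  fin_cases i <;>
  · simp only [hq, of_apply, cons_val', cons_val_zero, cons_val_one, cons_val_fin_one, mul_zero,
      zero_add, Pi.smul_apply, smul_eq_mul, Fin.zero_eta, Fin.mk_one, Fin.isValue]
    field_simp

/-- Componentwise asymptotics in the proof of Proposition 1.4: with
`v_m = E_m·(0, I_m/(r_e·J_m))ᵀ`, one has
`-(2m²/a²)·(r_i·a/r_e²)^m·(v_m)₁ → 1` and `-(2m²/a²)·(a/r_e)^m·(v_m)₂ → 1`
as `m → ∞`. -/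
theorem stmt_15
    (ri re a b R : ℝ) (hri : 0 < ri) (hrie : ri < re) (hrea : re ≤ a)
    (hab : a < b) (hbR : b ≤ R)
    (I J : ℕ → ℝ)
    (hI : ∀ m : ℕ, I m = ∫ s in a..b, ((R / s) ^ m - (s / R) ^ m) * s)
    (hJ : ∀ m : ℕ, J m = (R / re) ^ m - (re / R) ^ m)
    (E : ℕ → Matrix (Fin 2) (Fin 2) ℝ)
    (hE : ∀ m : ℕ, 1 ≤ m → E m = -(1 / (2 * (m : ℝ))) •
      !![ri * (1 - (re ^ 2 / (ri * R)) ^ (2 * m)),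
           re * (re / ri) ^ m * (1 - (re / R) ^ (2 * m));
         ri * (re / ri) ^ m * (1 - (re / R) ^ (2 * m)),
           re * (1 - (re / R) ^ (2 * m))])
    (v : ℕ → Fin 2 → ℝ)
    (hv : ∀ m : ℕ, 1 ≤ m → v m = (E m).mulVec ![0, I m / (re * J m)]) :
    Filter.Tendsto
        (fun m : ℕ => -(2 * (m : ℝ) ^ 2 / a ^ 2) * (ri * a / re ^ 2) ^ m * v m 0)
        Filter.atTop (nhds 1) ∧
    Filter.Tendsto
        (fun m : ℕ => -(2 * (m : ℝ) ^ 2 / a ^ 2) * (a / re) ^ m * v m 1)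
        Filter.atTop (nhds 1) := by
  have hre : 0 < re := hri.trans hrie
  have ha : 0 < a := hre.trans_le hrea
  have hR : 0 < R := ha.trans (hab.trans_le hbR)
  have hlim := tendsto_natCast_div_sq_mul_pow_mul_sourceIntegral ha hab hbR
  have hI' : I = sourceIntegral a b R := funext hI
  have hv_eq : ∀ m : ℕ, 1 ≤ m → v m = ![-(1 / (2 * m)) * (re / ri) ^ m * (re / R) ^ m * I m,
      -(1 / (2 * m)) * (re / R) ^ m * I m] := fun m hm => by
    rw [hv m hm, hE m hm, hJ]
    exact dtnModeInv_mulVec hre.ne' hR.ne'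
      (div_pow_sub_div_pow_pos hre (hrea.trans_lt (hab.trans_le hbR)) (by omega)).ne' _
  refine ⟨hlim.congr' ?_, hlim.congr' ?_⟩ <;> filter_upwards [eventually_ge_atTop 1] with m hm
  · simp only [hv_eq m hm, hI', cons_val_zero, div_pow]
    field_simp
    ring
  · simp only [hv_eq m hm, hI', cons_val_one, cons_val_fin_one, div_pow]
    field_simp
end
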